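/- Let Ω be a Cantor group and let T : Ω → Ω be a minimal translation. Then there exists a dense G_δ set 𝒢 ⊆ C(Ω,ℝ) such that for every f ∈ 𝒢 and every ω ∈ Ω, the potential V_ω given by V_ω(n) = f(Tⁿω) is a Gordon potential. -/

import Mathlib

open Filter

/-- A bounded function `V : ℤ → ℝ` is a Gordon potential if there are positive
integers `q k → ∞` such that `max_{1 ≤ n ≤ q k} |V(n) - V(n ± q k)| ≤ k^(-q k)`
for every `k ≥ 1`. -/
def IsGordonPotential (V : ℤ → ℝ) : Prop :=
  (∃ C : ℝ, ∀ n : ℤ, |V n| ≤ C) ∧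
  ∃ q : ℕ → ℕ, (∀ k, 1 ≤ q k) ∧ Tendsto q atTop atTop ∧
    ∀ k : ℕ, 1 ≤ k → ∀ n : ℤ, 1 ≤ n → n ≤ (q k : ℤ) →
      |V n - V (n + (q k : ℤ))| ≤ (k : ℝ) ^ (-(q k : ℤ)) ∧
      |V n - V (n - (q k : ℤ))| ≤ (k : ℝ) ^ (-(q k : ℤ))

/-!
A continuous function on a compact totally disconnected group is uniformly close to one that is
invariant under an open subgroup `H`. As `Ω ⧸ H` is finite, `q₀ • α ∈ H` for some `q₀ > 0`, so
such a function is periodic with period `q₀ • α`: its translation defect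
`d_q f = ‖f - f(· + q • α)‖` vanishes at every multiple `q` of `q₀`. Hence the open sets
`U_k = ⋃_{q > k} {f | d_q f * k ^ q < 1}` all contain a dense set, and their intersection is a dense
`G_δ`. For `f` in it, the sup-norm bound `d_q f < k ^ (-q)` controls `f(ω + n • α)` uniformly in
`ω` and `n`, which is the Gordon condition.
-/

open Function Set

/-- The condition `… * k ^ q ≤ 1` reads `… ≤ k ^ (-q)` for `k ≥ 1` and is vacuous at `k = 0`,
where `0 ^ (-q) = 0` would make it unsatisfiable. -/
theorem isGordonPotential_of_forall_exists_shift (V : ℤ → ℝ) (hV : ∃ C, ∀ n, |V n| ≤ C)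
    (h : ∀ k : ℕ, ∃ q : ℕ, k < q ∧ ∀ n, |V n - V (n + q)| * k ^ q ≤ 1) :
    IsGordonPotential V := by
  choose q hkq hq using h
  have bound (k : ℕ) (hk : 1 ≤ k) (n : ℤ) : |V n - V (n + q k)| ≤ (k : ℝ) ^ (-(q k : ℤ)) := by
    have : (0 : ℝ) < k := Nat.cast_pos.2 hk
    rw [zpow_neg, zpow_natCast, ← one_div, le_div_iff₀ (by positivity)]
    exact hq k n
  refine ⟨hV, q, fun k => k.zero_le.trans_lt (hkq k),
    tendsto_atTop_mono (fun k => (hkq k).le) tendsto_id, fun k hk n _ _ => ⟨bound k hk n, ?_⟩⟩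
  simpa [abs_sub_comm] using bound k hk (n - q k)

theorem OpenAddSubgroup.exists_pos_nsmul_mem {G : Type*} [AddCommGroup G] [TopologicalSpace G]
    [IsTopologicalAddGroup G] [CompactSpace G] (H : OpenAddSubgroup G) (a : G) :
    ∃ q : ℕ, 0 < q ∧ q • a ∈ H := by
  have : Finite (G ⧸ (H : AddSubgroup G)) := AddSubgroup.quotient_finite_of_isOpen _ H.isOpen
  refine ⟨addOrderOf (a : G ⧸ (H : AddSubgroup G)), addOrderOf_pos _, ?_⟩
  change _ ∈ (H : AddSubgroup G)
  rw [← QuotientAddGroup.eq_zero_iff, QuotientAddGroup.mk_nsmul, addOrderOf_nsmul_eq_zero]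

namespace ContinuousMap

variable {Ω : Type*} [TopologicalSpace Ω] [AddCommGroup Ω] [IsTopologicalAddGroup Ω]
  [CompactSpace Ω] {E : Type*} [PseudoMetricSpace E]

theorem exists_openAddSubgroup_dist_lt [TotallyDisconnectedSpace Ω] (f : C(Ω, E)) {ε : ℝ}
    (hε : 0 < ε) :
    ∃ H : OpenAddSubgroup Ω, ∀ x y, y - x ∈ H → dist (f x) (f y) < ε := by
  let := IsTopologicalAddGroup.rightUniformSpace Ω
  have := isUniformAddGroup_of_addCommGroup (G := Ω)
  have hf := CompactSpace.uniformContinuous_of_continuous f.continuous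
    (Metric.dist_mem_uniformity hε)
  rw [uniformity_eq_comap_nhds_zero Ω] at hf
  obtain ⟨U, hU, hUf⟩ := hf
  obtain ⟨V, hVU, hV, hV0⟩ := mem_nhds_iff.1 hU
  obtain ⟨H, hH⟩ := ProfiniteGrp.exist_openNormalAddSubgroup_sub_open_nhds_of_zero hV hV0
  exact ⟨H.toOpenAddSubgroup, fun x y hxy => @hUf (x, y) (hVU (hH hxy))⟩

theorem exists_invariant_dist_lt [TotallyDisconnectedSpace Ω] (f : C(Ω, E)) {ε : ℝ}
    (hε : 0 < ε) :
    ∃ H : OpenAddSubgroup Ω, ∃ g : C(Ω, E), dist f g < ε ∧ ∀ x, ∀ h ∈ H, g (x + h) = g x := by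
  obtain ⟨H, hH⟩ := f.exists_openAddSubgroup_dist_lt hε
  have := QuotientAddGroup.discreteTopology H.isOpen
  let g : C(Ω, E) := ⟨fun x => f (QuotientAddGroup.mk (s := H) x).out,
    (continuous_of_discreteTopology (f := fun y : Ω ⧸ (H : AddSubgroup Ω) => f y.out)).comp
      continuous_quotient_mk'⟩
  refine ⟨H, g, (dist_lt_iff hε).2 fun x => ?_, fun x h hh => ?_⟩
  · obtain ⟨h, hx⟩ := QuotientAddGroup.mk_out_eq_add (H : AddSubgroup Ω) x
    exact hH x _ (by simp [hx])
  · simp [g, QuotientAddGroup.mk_add_of_mem x hh]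

theorem dense_setOf_exists_periodic_nsmul [TotallyDisconnectedSpace Ω] (α : Ω) :
    Dense {g : C(Ω, E) | ∃ q : ℕ, 0 < q ∧ Periodic g (q • α)} := by
  refine Metric.dense_iff.2 fun f ε hε => ?_
  obtain ⟨H, g, hfg, hg⟩ := f.exists_invariant_dist_lt hε
  obtain ⟨q, hq, hqα⟩ := H.exists_pos_nsmul_mem α
  exact ⟨g, by rwa [Metric.mem_ball, dist_comm], q, hq, fun x => hg x _ hqα⟩

theorem isGordonPotential_orbit (f : C(Ω, ℝ)) (α : Ω)
    (hf : ∀ k : ℕ, ∃ q : ℕ, k < q ∧ dist f (f.comp (Homeomorph.addRight (q • α))) * k ^ q < 1)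
    (ω : Ω) : IsGordonPotential (fun n : ℤ => f (ω + n • α)) := by
  refine isGordonPotential_of_forall_exists_shift _
    ⟨‖f‖, fun n => by simpa using f.norm_coe_le_norm (ω + n • α)⟩ fun k => ?_
  obtain ⟨q, hkq, hq⟩ := hf k
  refine ⟨q, hkq, fun n => le_trans ?_ hq.le⟩
  gcongr
  have : ω + (n + q) • α = ω + n • α + q • α := by rw [add_zsmul, natCast_zsmul, add_assoc]
  simpa [this, Real.dist_eq] using
    f.dist_apply_le_dist (g := f.comp (Homeomorph.addRight (q • α))) (ω + n • α)

end ContinuousMap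

theorem statement3
    (Ω : Type*) [TopologicalSpace Ω] [AddCommGroup Ω] [IsTopologicalAddGroup Ω]
    [CompactSpace Ω] [TotallyDisconnectedSpace Ω]
    (α : Ω) :
    ∃ 𝒢 : Set C(Ω, ℝ), Dense 𝒢 ∧ IsGδ 𝒢 ∧
      ∀ f ∈ 𝒢, ∀ ω : Ω, IsGordonPotential (fun n : ℤ => f (ω + n • α)) := by
  let d (q : ℕ) (f : C(Ω, ℝ)) : ℝ := dist f (f.comp (Homeomorph.addRight (q • α)))
  refine ⟨⋂ k : ℕ, ⋃ q > k, {f | d q f * k ^ q < 1}, ?_, ?_, ?_⟩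
  · refine (ContinuousMap.dense_setOf_exists_periodic_nsmul α).mono ?_
    rintro g ⟨q₀, hq₀, hg⟩
    refine mem_iInter.2 fun k => mem_iUnion₂.2 ⟨(k + 1) * q₀, by nlinarith, ?_⟩
    have : g.comp (Homeomorph.addRight (((k + 1) * q₀) • α)) = g :=
      ContinuousMap.ext (by simpa [mul_nsmul'] using hg.nsmul (k + 1))
    simp [d, this]
  · refine .iInter fun k => (isOpen_biUnion fun q _ => isOpen_lt ?_ continuous_const).isGδ
    exact (continuous_id.dist (ContinuousMap.continuous_precomp _)).mul continuous_const
  · intro f hf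
    exact f.isGordonPotential_orbit α fun k => by simpa using mem_iInter.1 hf k
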